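/- For every real constant c > 0 and every natural number n, there exist real numbers λ_1, …, λ_n, all lying in the open interval (0,1), such that λ_k > (2^{k−1}/c)·[1 − ∏_{j=1}^{k−1} (1+√(1−λ_j²))/2] holds for every k = 1, …, n (for k = 1 the empty product equals 1, so the condition reads λ_1 > 0). -/

import Mathlib

/-!
Take all `λ_j` equal to one small `ε`. Since `√(1 - ε²) ≥ 1 - ε²`, each factor
`(1 + √(1 - ε²))/2` is `1 - d` with `d ≤ ε²`, and Bernoulli's inequality gives
`1 - (1 - d)^(k-1) ≤ (k - 1) ε²`. So the `k`-th condition only asks for `2^(k-1) (k-1) ε < c`,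
which `ε ≤ c / 4ⁿ` guarantees for all `k ≤ n`.
-/

lemma one_sub_le_sqrt_one_sub_sq (x : ℝ) : 1 - x ^ 2 ≤ √(1 - x ^ 2) := by
  rw [Real.le_sqrt_self_iff]
  linarith [sq_nonneg x]

lemma one_sub_pow_le_mul {d : ℝ} (hd : d ≤ 2) (m : ℕ) : 1 - (1 - d) ^ m ≤ m * d := by
  have := one_add_mul_le_pow (a := -d) (by linarith) m
  rw [← sub_eq_add_neg] at this
  linarith

lemma two_pow_mul_lt_four_pow (m : ℕ) : 2 ^ m * m < 4 ^ m := by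
  calc 2 ^ m * m < 2 ^ m * 2 ^ m := Nat.mul_lt_mul_of_pos_left m.lt_two_pow_self (by positivity)
    _ = 4 ^ m := by rw [← mul_pow]; norm_num

lemma one_sub_prod_half_one_add_sqrt_le (ε : ℝ) (m : ℕ) :
    1 - ∏ _j ∈ Finset.Icc 1 m, (1 + √(1 - ε ^ 2)) / 2 ≤ m * ε ^ 2 := by
  set d := (1 - √(1 - ε ^ 2)) / 2 with hd_def
  have hd : d ≤ ε ^ 2 := by
    rw [hd_def]; linarith [one_sub_le_sqrt_one_sub_sq ε, sq_nonneg ε]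
  have hd2 : d ≤ 2 := by
    rw [hd_def]; linarith [Real.sqrt_nonneg (1 - ε ^ 2)]
  rw [Finset.prod_const, Nat.card_Icc, Nat.add_sub_cancel,
    show (1 + √(1 - ε ^ 2)) / 2 = 1 - d by ring]
  calc 1 - (1 - d) ^ m ≤ m * d := one_sub_pow_le_mul hd2 m
    _ ≤ m * ε ^ 2 := by gcongr

theorem sharpness_parameters_exist
    (c : ℝ) (hc : 0 < c) (n : ℕ) :
    ∃ lam : ℕ → ℝ,
      (∀ k, 1 ≤ k → k ≤ n → lam k ∈ Set.Ioo (0 : ℝ) 1) ∧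
      ∀ k, 1 ≤ k → k ≤ n →
        lam k > (2 : ℝ) ^ (k - 1) / c
          * (1 - ∏ j ∈ Finset.Icc 1 (k - 1), (1 + Real.sqrt (1 - lam j ^ 2)) / 2) := by
  set ε : ℝ := min (1 / 2) (c / 4 ^ n)
  have hε : 0 < ε := lt_min (by norm_num) (by positivity)
  have hεc : ε * 4 ^ n ≤ c := (le_div_iff₀ (by positivity)).1 (min_le_right _ _)
  refine ⟨fun _ => ε, fun _ _ _ => ⟨hε, (min_le_left _ _).trans_lt (by norm_num)⟩, ?_⟩
  intro k _ hkn
  have hgrowth : (2 : ℝ) ^ (k - 1) * (k - 1 : ℕ) < 4 ^ n := by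
    calc (2 : ℝ) ^ (k - 1) * (k - 1 : ℕ) < 4 ^ (k - 1) := by
          exact_mod_cast two_pow_mul_lt_four_pow (k - 1)
      _ ≤ 4 ^ n := pow_le_pow_right₀ (by norm_num) (by omega)
  calc (2 : ℝ) ^ (k - 1) / c * (1 - ∏ _j ∈ Finset.Icc 1 (k - 1), (1 + √(1 - ε ^ 2)) / 2)
      ≤ 2 ^ (k - 1) / c * ((k - 1 : ℕ) * ε ^ 2) := by
        gcongr
        exact one_sub_prod_half_one_add_sqrt_le ε (k - 1)
    _ = (2 ^ (k - 1) * (k - 1 : ℕ) * ε) * ε / c := by ring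
    _ < c * ε / c := by
        gcongr
        exact (mul_lt_mul_of_pos_right hgrowth hε).trans_le (by linarith)
    _ = ε := by field_simp
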